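/- arXiv:1906.05363 — 4 statements merged into one kernel-verified Lean document; each statement's English description precedes it below -/
import Mathlib

section
/- If every agent submits a 'valid' ranking (i.e., whenever an arm is ranked above the agent's optimal stable match, that arm truly has higher mean reward for the agent), then the agent-proposing Gale-Shapley algorithm run on these submitted rankings (with arms' true rankings) outputs a matching m such that every agent's matched arm has true mean reward at least that of their optimal stable match. -/
/-- `(i, j)` is a blocking pair for matching `m`: arm `j` is not `i`'s match,
agent `i` prefers `j` to their match, and arm `j` is unmatched or prefers `i`
(a smaller `armRank` value means a better rank). -/
def BlockingPair {N K : ℕ} (pref : Fin N → Fin K → Fin K → Prop)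
    (armRank : Fin K → Fin N → ℕ) (m : Fin N → Fin K) (i : Fin N) (j : Fin K) : Prop :=
  m i ≠ j ∧ pref i j (m i) ∧
    ((∀ i', m i' ≠ j) ∨ ∃ i', m i' = j ∧ armRank j i < armRank j i')

/-- A matching (injective assignment of agents to arms) is stable iff it has no blocking pair. -/
def IsStableMatching {N K : ℕ} (pref : Fin N → Fin K → Fin K → Prop)
    (armRank : Fin K → Fin N → ℕ) (m : Fin N → Fin K) : Prop :=
  Function.Injective m ∧ ∀ i j, ¬ BlockingPair pref armRank m i j

/-- Agents' true preferences, induced by mean rewards. -/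
def truePref {N K : ℕ} (μ : Fin N → Fin K → ℝ) : Fin N → Fin K → Fin K → Prop :=
  fun i j j' => μ i j' < μ i j

/-! Validity says that every arm an agent ranks above `mbar i` is truly better than `mbar i`, so a
blocking pair of `mbar` under the submitted rankings would block it under the true preferences too:
`mbar` is stable for the submitted rankings. Agent-optimality of `m` then puts `m i` weakly above
`mbar i` in agent `i`'s submitted ranking, and validity turns this into the reward inequality. -/

theorem IsStableMatching.of_pref_imp {N K : ℕ} {pref pref' : Fin N → Fin K → Fin K → Prop}
    {armRank : Fin K → Fin N → ℕ} {m : Fin N → Fin K} (hm : IsStableMatching pref armRank m)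
    (himp : ∀ i j, pref' i j (m i) → pref i j (m i)) : IsStableMatching pref' armRank m :=
  ⟨hm.1, fun i j ⟨hne, hpref, harm⟩ => hm.2 i j ⟨hne, himp i j hpref, harm⟩⟩

theorem etc_valid_rankings_give_optimal_general
    (N K : ℕ)
    (μ : Fin N → Fin K → ℝ) (armRank : Fin K → Fin N → ℕ)
    -- `mbar` is the agent-optimal stable matching for the true preferences
    (mbar : Fin N → Fin K)
    (hbarStable : IsStableMatching (truePref μ) armRank mbar)
    -- submitted rankings (smaller value = better rank), each a strict ranking of arms
    (r : Fin N → Fin K → ℕ)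
    (hrInj : ∀ i, Function.Injective (r i))
    -- validity: any arm ranked above `mbar i` truly has a higher mean reward
    (hvalid : ∀ i j, r i j < r i (mbar i) → μ i (mbar i) < μ i j)
    -- `m` is the output of agent-proposing Gale–Shapley on the submitted rankings:
    -- stable w.r.t. the submitted rankings, and agent-optimal among such matchings
    (m : Fin N → Fin K)
    (hmOpt : ∀ m', IsStableMatching (fun i j j' => r i j < r i j') armRank m' →
      ∀ i, r i (m i) ≤ r i (m' i)) :
    ∀ i, μ i (mbar i) ≤ μ i (m i) := by
  intro i
  have hbarStable' : IsStableMatching (fun i j j' => r i j < r i j') armRank mbar :=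
    hbarStable.of_pref_imp hvalid
  rcases (hmOpt mbar hbarStable' i).lt_or_eq with hlt | heq
  · exact (hvalid i (m i) hlt).le
  · rw [hrInj i heq]

/-- if every agent submits a valid ranking, then the agent-proposing
Gale–Shapley algorithm run on the submitted rankings (i.e. any matching `m` which is stable
for the submitted rankings and agent-optimal among such stable matchings) yields every
agent an arm whose true mean reward is at least that of their optimal stable match. -/
theorem etc_valid_rankings_give_optimal
    (N K : ℕ) (hNK : N ≤ K)
    (μ : Fin N → Fin K → ℝ) (armRank : Fin K → Fin N → ℕ)
    (harmRank : ∀ j, Function.Injective (armRank j))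
    (hdistinct : ∀ i, Function.Injective (μ i))
    -- `mbar` is the agent-optimal stable matching for the true preferences
    (mbar : Fin N → Fin K)
    (hbarStable : IsStableMatching (truePref μ) armRank mbar)
    (hbarOpt : ∀ m', IsStableMatching (truePref μ) armRank m' →
      ∀ i, μ i (m' i) ≤ μ i (mbar i))
    -- submitted rankings (smaller value = better rank), each a strict ranking of arms
    (r : Fin N → Fin K → ℕ)
    (hrInj : ∀ i, Function.Injective (r i))
    -- validity: any arm ranked above `mbar i` truly has a higher mean reward
    (hvalid : ∀ i j, r i j < r i (mbar i) → μ i (mbar i) < μ i j)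
    -- `m` is the output of agent-proposing Gale–Shapley on the submitted rankings:
    -- stable w.r.t. the submitted rankings, and agent-optimal among such matchings
    (m : Fin N → Fin K)
    (hmStable : IsStableMatching (fun i j j' => r i j < r i j') armRank m)
    (hmOpt : ∀ m', IsStableMatching (fun i j j' => r i j < r i j') armRank m' →
      ∀ i, r i (m i) ≤ r i (m' i)) :
    ∀ i, μ i (mbar i) ≤ μ i (m i) :=
  etc_valid_rankings_give_optimal_general N K μ armRank mbar hbarStable r hrInj hvalid m hmOpt
end

section
/- If all agents submit valid rankings, then the true agent-optimal stable matching m̄ is stable with respect to the submitted rankings (together with the arms' true rankings). -/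
theorem IsStableMatching.of_pref_imp_at_match {N K : ℕ} {pref pref' : Fin N → Fin K → Fin K → Prop}
    {armRank : Fin K → Fin N → ℕ} {m : Fin N → Fin K} (hm : IsStableMatching pref armRank m)
    (hpref : ∀ i j, pref' i j (m i) → pref i j (m i)) :
    IsStableMatching pref' armRank m :=
  ⟨hm.1, fun i j hb => hm.2 i j ⟨hb.1, hpref i j hb.2.1, hb.2.2⟩⟩

theorem mbar_stable_for_valid_rankings_general
    (N K : ℕ)
    (μ : Fin N → Fin K → ℝ) (armRank : Fin K → Fin N → ℕ)
    (mbar : Fin N → Fin K)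
    (hbarStable : IsStableMatching (truePref μ) armRank mbar)
    (r : Fin N → Fin K → ℕ)
    (hvalid : ∀ i j, r i j < r i (mbar i) → μ i (mbar i) < μ i j) :
    IsStableMatching (fun i j j' => r i j < r i j') armRank mbar :=
  hbarStable.of_pref_imp_at_match hvalid

/-- if all agents submit valid rankings, the true agent-optimal stable matching
`mbar` is stable with respect to the submitted rankings (and the arms' true rankings). -/
theorem mbar_stable_for_valid_rankings
    (N K : ℕ) (hNK : N ≤ K)
    (μ : Fin N → Fin K → ℝ) (armRank : Fin K → Fin N → ℕ)
    (harmRank : ∀ j, Function.Injective (armRank j))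
    (hdistinct : ∀ i, Function.Injective (μ i))
    (mbar : Fin N → Fin K)
    (hbarStable : IsStableMatching (truePref μ) armRank mbar)
    (hbarOpt : ∀ m', IsStableMatching (truePref μ) armRank m' →
      ∀ i, μ i (m' i) ≤ μ i (mbar i))
    (r : Fin N → Fin K → ℕ)
    (hrInj : ∀ i, Function.Injective (r i))
    (hvalid : ∀ i j, r i j < r i (mbar i) → μ i (mbar i) < μ i j) :
    IsStableMatching (fun i j j' => r i j < r i j') armRank mbar :=
  mbar_stable_for_valid_rankings_general N K μ armRank mbar hbarStable r hvalid
end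

section
/- In the global-preferences market, for any agent p_i and arm a_ℓ with ℓ > i, every achievable non-truly-stable matching in which p_i is matched to a_ℓ is blocked by some triplet (p_i, a_k, a_ℓ) with 1 ≤ k ≤ i; i.e., the set of triplets {(p_i, a_k, a_ℓ) : k ≤ i} covers M_{i,ℓ}. -/
/-!
If none of the arms `a_k`, `k ≤ i`, blocked together with `p_i`, then each of them would be
held by an agent strictly better than `p_i` (it cannot be `p_i` himself, who holds `a_ℓ` with
`ℓ > i`). That sends `i + 1` arms to their partners among the `i` agents `p_{i'}`, `i' < i`,
contradicting the pigeonhole principle.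
-/

open Finset

theorem Fin.exists_le_forall_apply_ne {α : Type*} {K : ℕ} (m : α → Fin K) (s : Finset α)
    (k₀ : Fin K) (hs : #s ≤ k₀) : ∃ k ≤ k₀, ∀ a ∈ s, m a ≠ k := by
  classical
  by_contra! hcover
  have hsub : Iic k₀ ⊆ s.image m := fun k hk => by
    obtain ⟨a, ha, hak⟩ := hcover k (mem_Iic.1 hk)
    exact mem_image.2 ⟨a, ha, hak⟩
  have := (card_le_card hsub).trans card_image_le
  rw [Fin.card_Iic] at this
  omega

theorem global_preferences_cover_general
    (N K : ℕ)
    (μ : Fin N → Fin K → ℝ)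
    (hglobal : ∀ (i : Fin N) (j j' : Fin K), j < j' → μ i j' < μ i j)
    (armRank : Fin K → Fin N → ℕ)
    (harm : ∀ (j : Fin K) (i : Fin N), armRank j i = (i : ℕ))
    (m : Fin N → Fin K)
    (i : Fin N) (ℓ : Fin K) (hmi : m i = ℓ) (hil : (i : ℕ) < (ℓ : ℕ)) :
    ∃ k : Fin K, (k : ℕ) ≤ (i : ℕ) ∧ μ i ℓ < μ i k ∧
      ((∀ i', m i' ≠ k) ∨ ∃ i', m i' = k ∧ armRank k i < armRank k i') := by
  obtain ⟨k, hk, hfree⟩ :=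
    Fin.exists_le_forall_apply_ne m (Iio i) ⟨i, by omega⟩ (by simp [Fin.card_Iio])
  have hki : (k : ℕ) ≤ i := hk
  refine ⟨k, hki, hglobal i k ℓ (Fin.lt_def.2 (by omega)), ?_⟩
  by_cases hheld : ∃ i', m i' = k
  · obtain ⟨i', hi'⟩ := hheld
    have hne : i' ≠ i := by
      rintro rfl
      have : (k : ℕ) = ℓ := by rw [← hi', hmi]
      omega
    have hnlt : ¬ i' < i := fun h => hfree i' (mem_Iio.2 h) hi'
    refine Or.inr ⟨i', hi', ?_⟩
    rw [harm, harm]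
    exact lt_of_le_of_ne (not_lt.1 hnlt) (Fin.val_ne_of_ne hne.symm)
  · exact Or.inl (not_exists.1 hheld)

/-- in the global-preferences market (all agents rank `a_1 ≻ ⋯ ≻ a_K`, all
arms rank `p_1 ≻ ⋯ ≻ p_N`), every matching in which agent `p_i` is matched to an arm `a_ℓ`
with `ℓ > i` is blocked by some triplet `(p_i, a_k, a_ℓ)` with `k ≤ i`: agent `p_i` prefers
`a_k` to `a_ℓ` and arm `a_k` is unmatched or matched to an agent ranked below `p_i`. -/
theorem global_preferences_cover
    (N K : ℕ) (hNK : N ≤ K)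
    (μ : Fin N → Fin K → ℝ)
    (hglobal : ∀ (i : Fin N) (j j' : Fin K), j < j' → μ i j' < μ i j)
    (armRank : Fin K → Fin N → ℕ)
    (harm : ∀ (j : Fin K) (i : Fin N), armRank j i = (i : ℕ))
    (m : Fin N → Fin K) (hmInj : Function.Injective m)
    (i : Fin N) (ℓ : Fin K) (hmi : m i = ℓ) (hil : (i : ℕ) < (ℓ : ℕ)) :
    ∃ k : Fin K, (k : ℕ) ≤ (i : ℕ) ∧ μ i ℓ < μ i k ∧
      ((∀ i', m i' ≠ k) ∨ ∃ i', m i' = k ∧ armRank k i < armRank k i') :=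
  global_preferences_cover_general N K μ hglobal armRank harm m i ℓ hmi hil
end

section
/- Suppose all agents except agent i submit UCB-based rankings to the Gale-Shapley platform, while agent i submits arbitrary rankings. If at some round agent i is matched to an arm ℓ with μ_i(ℓ) > μ_i(m̄(i)) (strictly better than i's optimal stable match), then the matching played that round contains a blocking triplet (j, k, k′) with j ≠ i. -/
namespace GSProof

variable {N K : ℕ}

structure St (N K : ℕ) where
  held : Fin K → Option (Fin N)
  prop : Fin N → Finset (Fin K)

def freeAg (σ : St N K) (j : Fin N) : Prop := ∀ w, σ.held w ≠ some j

def doStep (rk : Fin K → Fin N → ℕ) (σ : St N K) (j : Fin N) (w : Fin K) : St N K where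
  held := fun w' =>
    if w' = w then
      match σ.held w with
      | none => some j
      | some c => if rk w j < rk w c then some j else some c
    else σ.held w'
  prop := fun j' => if j' = j then insert w (σ.prop j') else σ.prop j'

lemma doStep_prop (rk : Fin K → Fin N → ℕ) (σ : St N K) (j : Fin N) (w : Fin K) (j' : Fin N) :
    (doStep rk σ j w).prop j' = if j' = j then insert w (σ.prop j') else σ.prop j' := rfl

lemma doStep_held_other (rk : Fin K → Fin N → ℕ) (σ : St N K) (j : Fin N) {w w' : Fin K}
    (h : w' ≠ w) : (doStep rk σ j w).held w' = σ.held w' := by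
  simp [doStep, h]

lemma doStep_prop_sub (rk : Fin K → Fin N → ℕ) (σ : St N K) (j : Fin N) (w : Fin K) (j' : Fin N) :
    σ.prop j' ⊆ (doStep rk σ j w).prop j' := by
  rw [doStep_prop]; split
  · exact Finset.subset_insert _ _
  · exact fun _ h => h

lemma doStep_held_tri (rk : Fin K → Fin N → ℕ) (σ : St N K) (j : Fin N) (w : Fin K) :
    (σ.held w = none ∧ (doStep rk σ j w).held w = some j) ∨
    (∃ c, σ.held w = some c ∧ rk w j < rk w c ∧ (doStep rk σ j w).held w = some j) ∨
    (∃ c, σ.held w = some c ∧ rk w c ≤ rk w j ∧ (doStep rk σ j w).held w = some c) := by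
  rcases hc : σ.held w with _ | c
  · exact Or.inl ⟨rfl, by simp [doStep, hc]⟩
  · by_cases hlt : rk w j < rk w c
    · exact Or.inr (Or.inl ⟨c, rfl, hlt, by simp [doStep, hc, hlt]⟩)
    · exact Or.inr (Or.inr ⟨c, rfl, not_lt.1 hlt, by simp [doStep, hc, hlt]⟩)

lemma doStep_prop_new (rk : Fin K → Fin N → ℕ) {σ : St N K} {j j' : Fin N} {w w' : Fin K}
    (h0 : w' ∉ σ.prop j') (h1 : w' ∈ (doStep rk σ j w).prop j') : j' = j ∧ w' = w := by
  rw [doStep_prop] at h1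
  by_cases hjj : j' = j
  · subst hjj
    rw [if_pos rfl] at h1
    rcases Finset.mem_insert.1 h1 with h | h
    · exact ⟨rfl, h⟩
    · exact absurd h h0
  · rw [if_neg hjj] at h1; exact absurd h1 h0

variable (μ : Fin N → Fin K → ℝ) (rk : Fin K → Fin N → ℕ)

def Chooseable (σ : St N K) : Prop :=
  ∃ p : Fin N × Fin K, freeAg σ p.1 ∧ p.2 ∉ σ.prop p.1 ∧
    ∀ x, x ∉ σ.prop p.1 → μ p.1 x ≤ μ p.1 p.2

open Classical in
noncomputable def step (σ : St N K) : St N K :=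
  if h : Chooseable μ σ then doStep rk σ h.choose.1 h.choose.2 else σ

noncomputable def run : ℕ → St N K
  | 0 => ⟨fun _ => none, fun _ => ∅⟩
  | t + 1 => step μ rk (run t)

lemma run_succ (t : ℕ) : run μ rk (t + 1) = step μ rk (run μ rk t) := rfl

lemma step_cases (σ : St N K) :
    (¬ Chooseable μ σ ∧ step μ rk σ = σ) ∨
    ∃ j w, freeAg σ j ∧ w ∉ σ.prop j ∧ (∀ x, x ∉ σ.prop j → μ j x ≤ μ j w) ∧
      step μ rk σ = doStep rk σ j w := by
  by_cases h : Chooseable μ σ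
  · exact Or.inr ⟨h.choose.1, h.choose.2, h.choose_spec.1, h.choose_spec.2.1,
      h.choose_spec.2.2, by simp [step, h]⟩
  · exact Or.inl ⟨h, by simp [step, h]⟩

def evt (t : ℕ) (j : Fin N) (w : Fin K) : Prop :=
  w ∉ (run μ rk t).prop j ∧ w ∈ (run μ rk (t + 1)).prop j

lemma prop_mono (t : ℕ) (j : Fin N) : (run μ rk t).prop j ⊆ (run μ rk (t + 1)).prop j := by
  rcases step_cases μ rk (run μ rk t) with ⟨_, h⟩ | ⟨j₀, w₀, _, _, _, h⟩
  · rw [run_succ, h]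
  · rw [run_succ, h]; exact doStep_prop_sub rk _ j₀ w₀ j

lemma prop_mono_le {t t' : ℕ} (h : t ≤ t') (j : Fin N) :
    (run μ rk t).prop j ⊆ (run μ rk t').prop j := by
  induction t', h using Nat.le_induction with
  | base => exact fun _ h => h
  | succ n hn ih => exact fun x hx => prop_mono μ rk n j (ih hx)

lemma evt_spec {t : ℕ} {j : Fin N} {w : Fin K} (h : evt μ rk t j w) :
    freeAg (run μ rk t) j ∧ (∀ x, x ∉ (run μ rk t).prop j → μ j x ≤ μ j w) ∧
      run μ rk (t + 1) = doStep rk (run μ rk t) j w := by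
  rcases step_cases μ rk (run μ rk t) with ⟨_, he⟩ | ⟨j₀, w₀, hf, hw, hm, he⟩
  · have h2 := h.2; rw [run_succ, he] at h2; exact absurd h2 h.1
  · have h2 := h.2; rw [run_succ, he] at h2
    obtain ⟨rfl, rfl⟩ := doStep_prop_new rk h.1 h2
    exact ⟨hf, hm, by rw [run_succ, he]⟩

lemma evt_time_unique {t : ℕ} {j j' : Fin N} {w w' : Fin K}
    (h : evt μ rk t j w) (h' : evt μ rk t j' w') : j = j' ∧ w = w' := by
  have hs := (evt_spec μ rk h').2.2
  have h2 := h.2; rw [hs] at h2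
  obtain ⟨rfl, rfl⟩ := doStep_prop_new rk h.1 h2
  exact ⟨rfl, rfl⟩

lemma evt_pair_unique {t t' : ℕ} {j : Fin N} {w : Fin K}
    (h : evt μ rk t j w) (h' : evt μ rk t' j w) : t = t' := by
  rcases lt_trichotomy t t' with hlt | heq | hlt
  · exact absurd (prop_mono_le μ rk hlt j h.2) h'.1
  · exact heq
  · exact absurd (prop_mono_le μ rk hlt j h'.2) h.1

lemma held_unchanged {t : ℕ} {w : Fin K} (h : ∀ j, ¬ evt μ rk t j w) :
    (run μ rk (t + 1)).held w = (run μ rk t).held w := by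
  rcases step_cases μ rk (run μ rk t) with ⟨_, he⟩ | ⟨j₀, w₀, hf, hw, hm, he⟩
  · rw [run_succ, he]
  · by_cases hww : w = w₀
    · subst hww
      exact absurd ⟨hw, by rw [run_succ, he, doStep_prop, if_pos rfl]; exact Finset.mem_insert_self _ _⟩ (h j₀)
    · rw [run_succ, he, doStep_held_other rk _ j₀ hww]

lemma held_change {t : ℕ} {w : Fin K}
    (h : (run μ rk (t + 1)).held w ≠ (run μ rk t).held w) :
    ∃ j, evt μ rk t j w ∧ (run μ rk (t + 1)).held w = some j := by
  rcases step_cases μ rk (run μ rk t) with ⟨_, he⟩ | ⟨j₀, w₀, hf, hw, hm, he⟩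
  · exact absurd (by rw [run_succ, he]) h
  · by_cases hww : w = w₀
    · subst hww
      have hevt : evt μ rk t j₀ w :=
        ⟨hw, by rw [run_succ, he, doStep_prop, if_pos rfl]; exact Finset.mem_insert_self _ _⟩
      rcases doStep_held_tri rk (run μ rk t) j₀ w with ⟨_, hh⟩ | ⟨c, _, _, hh⟩ | ⟨c, hc, _, hh⟩
      · exact ⟨j₀, hevt, by rw [run_succ, he, hh]⟩
      · exact ⟨j₀, hevt, by rw [run_succ, he, hh]⟩
      · exact absurd (by rw [run_succ, he, hh, hc]) h
    · exact absurd (by rw [run_succ, he, doStep_held_other rk _ j₀ hww]) h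

lemma became_held {t t' : ℕ} {j : Fin N} {w : Fin K} (htt : t ≤ t')
    (h0 : (run μ rk t).held w ≠ some j) (h1 : (run μ rk t').held w = some j) :
    ∃ τ, t ≤ τ ∧ τ < t' ∧ evt μ rk τ j w := by
  induction t', htt using Nat.le_induction with
  | base => exact absurd h1 h0
  | succ n hn ih =>
    by_cases hc : (run μ rk (n + 1)).held w = (run μ rk n).held w
    · obtain ⟨τ, h₁, h₂, h₃⟩ := ih (by rw [← hc]; exact h1)
      exact ⟨τ, h₁, Nat.lt_succ_of_lt h₂, h₃⟩
    · obtain ⟨j', hevt, hh⟩ := held_change μ rk hc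
      have : j' = j := by rw [h1] at hh; exact (Option.some_inj.1 hh).symm
      subst this
      exact ⟨n, hn, Nat.lt_succ_self n, hevt⟩

lemma prop_origin {t t' : ℕ} {j : Fin N} {w : Fin K} (htt : t ≤ t')
    (h0 : w ∉ (run μ rk t).prop j) (h1 : w ∈ (run μ rk t').prop j) :
    ∃ τ, t ≤ τ ∧ τ < t' ∧ evt μ rk τ j w := by
  induction t', htt using Nat.le_induction with
  | base => exact absurd h1 h0
  | succ n hn ih =>
    by_cases hc : w ∈ (run μ rk n).prop j
    · obtain ⟨τ, h₁, h₂, h₃⟩ := ih hc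
      exact ⟨τ, h₁, Nat.lt_succ_of_lt h₂, h₃⟩
    · exact ⟨n, hn, Nat.lt_succ_self n, hc, h1⟩



structure Inv (σ : St N K) : Prop where
  I1 : ∀ ⦃w w' : Fin K⦄ ⦃j : Fin N⦄, σ.held w = some j → σ.held w' = some j → w = w'
  I2 : ∀ ⦃w : Fin K⦄ ⦃j : Fin N⦄, σ.held w = some j → w ∈ σ.prop j
  I3 : ∀ ⦃w : Fin K⦄ ⦃j : Fin N⦄, w ∈ σ.prop j → ∃ j', σ.held w = some j' ∧ rk w j' ≤ rk w j
  I6 : ∀ ⦃j : Fin N⦄ ⦃w x : Fin K⦄, w ∈ σ.prop j → μ j w < μ j x → x ∈ σ.prop j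
  I7 : ∀ ⦃w : Fin K⦄ ⦃j : Fin N⦄ ⦃x : Fin K⦄, σ.held w = some j → x ∈ σ.prop j → μ j w ≤ μ j x

lemma inv_doStep {σ : St N K} (hσ : Inv μ rk σ) {j : Fin N} {w : Fin K}
    (hfree : freeAg σ j) (hw : w ∉ σ.prop j) (hmax : ∀ x, x ∉ σ.prop j → μ j x ≤ μ j w) :
    Inv μ rk (doStep rk σ j w) := by
  have hpropmem : ∀ (j' : Fin N) (x : Fin K), x ∈ (doStep rk σ j w).prop j' ↔
      (j' = j ∧ x = w) ∨ x ∈ σ.prop j' := by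
    intro j' x
    rw [doStep_prop]
    by_cases hjj : j' = j
    · subst hjj; simp [Finset.mem_insert]
    · simp [hjj]
  have hheld_other : ∀ {w' : Fin K}, w' ≠ w → (doStep rk σ j w).held w' = σ.held w' :=
    fun h => doStep_held_other rk σ j h
  -- the agent held at w after the step
  rcases doStep_held_tri rk σ j w with ⟨hcn, hnew⟩ | ⟨c, hc, hlt, hnew⟩ | ⟨c, hc, hle, hnew⟩
  case inl =>
    -- w was unheld, now holds j; moreover nobody had proposed to w before
    have hnoprop : ∀ j' : Fin N, w ∉ σ.prop j' := by
      intro j' hmem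
      obtain ⟨j'', hj'', _⟩ := hσ.I3 hmem
      rw [hcn] at hj''; cases hj''
    constructor
    · intro w₁ w₂ j₁ h₁ h₂
      by_cases e₁ : w₁ = w <;> by_cases e₂ : w₂ = w
      · rw [e₁, e₂]
      · subst e₁; rw [hnew] at h₁
        rw [hheld_other e₂] at h₂
        exact absurd h₂ (by rw [← Option.some_inj.1 h₁]; exact hfree w₂)
      · subst e₂; rw [hnew] at h₂
        rw [hheld_other e₁] at h₁
        exact absurd h₁ (by rw [← Option.some_inj.1 h₂]; exact hfree w₁)
      · rw [hheld_other e₁] at h₁; rw [hheld_other e₂] at h₂; exact hσ.I1 h₁ h₂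
    · intro w₁ j₁ h₁
      by_cases e₁ : w₁ = w
      · subst e₁; rw [hnew] at h₁
        rw [(hpropmem j₁ w₁)]
        exact Or.inl ⟨(Option.some_inj.1 h₁).symm, rfl⟩
      · rw [hheld_other e₁] at h₁
        exact doStep_prop_sub rk σ j w j₁ (hσ.I2 h₁)
    · intro w₁ j₁ h₁
      rcases (hpropmem j₁ w₁).1 h₁ with ⟨heq, rfl⟩ | hold
      · exact ⟨j, hnew, by rw [heq]⟩
      · by_cases e₁ : w₁ = w
        · subst e₁; exact absurd hold (hnoprop j₁)
        · obtain ⟨j', hj', hr⟩ := hσ.I3 hold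
          exact ⟨j', by rw [hheld_other e₁]; exact hj', hr⟩
    · intro j₁ w₁ x h₁ hlt₁
      rcases (hpropmem j₁ w₁).1 h₁ with ⟨heq, rfl⟩ | hold
      · rw [hpropmem]
        by_cases hx : x ∈ σ.prop j
        · rw [heq]; exact Or.inr hx
        · rw [heq] at hlt₁
          exact absurd (hmax x hx) (not_le.2 hlt₁)
      · exact doStep_prop_sub rk σ j w j₁ (hσ.I6 hold hlt₁)
    · intro w₁ j₁ x h₁ hx
      by_cases e₁ : w₁ = w
      · subst e₁; rw [hnew] at h₁
        obtain rfl : j = j₁ := Option.some_inj.1 h₁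
        rcases (hpropmem j x).1 hx with ⟨_, rfl⟩ | hold
        · exact le_refl _
        · by_contra hcon
          exact hw (hσ.I6 hold (not_le.1 hcon))
      · rw [hheld_other e₁] at h₁
        have hj₁ : j₁ ≠ j := fun e => (hfree w₁) (e ▸ h₁)
        rcases (hpropmem j₁ x).1 hx with ⟨e, _⟩ | hold
        · exact absurd e hj₁
        · exact hσ.I7 h₁ hold
  case inr.inl =>
    -- w held c, j preferred, now holds j
    constructor
    · intro w₁ w₂ j₁ h₁ h₂
      by_cases e₁ : w₁ = w <;> by_cases e₂ : w₂ = w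
      · rw [e₁, e₂]
      · subst e₁; rw [hnew] at h₁
        rw [hheld_other e₂] at h₂
        exact absurd h₂ (by rw [← Option.some_inj.1 h₁]; exact hfree w₂)
      · subst e₂; rw [hnew] at h₂
        rw [hheld_other e₁] at h₁
        exact absurd h₁ (by rw [← Option.some_inj.1 h₂]; exact hfree w₁)
      · rw [hheld_other e₁] at h₁; rw [hheld_other e₂] at h₂; exact hσ.I1 h₁ h₂
    · intro w₁ j₁ h₁
      by_cases e₁ : w₁ = w
      · subst e₁; rw [hnew] at h₁
        rw [(hpropmem j₁ w₁)]
        exact Or.inl ⟨(Option.some_inj.1 h₁).symm, rfl⟩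
      · rw [hheld_other e₁] at h₁
        exact doStep_prop_sub rk σ j w j₁ (hσ.I2 h₁)
    · intro w₁ j₁ h₁
      rcases (hpropmem j₁ w₁).1 h₁ with ⟨heq, rfl⟩ | hold
      · exact ⟨j, hnew, by rw [heq]⟩
      · by_cases e₁ : w₁ = w
        · subst e₁
          obtain ⟨j', hj', hr⟩ := hσ.I3 hold
          rw [hc] at hj'
          obtain rfl : c = j' := Option.some_inj.1 hj'
          exact ⟨j, hnew, le_of_lt (lt_of_lt_of_le hlt hr)⟩
        · obtain ⟨j', hj', hr⟩ := hσ.I3 hold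
          exact ⟨j', by rw [hheld_other e₁]; exact hj', hr⟩
    · intro j₁ w₁ x h₁ hlt₁
      rcases (hpropmem j₁ w₁).1 h₁ with ⟨heq, rfl⟩ | hold
      · rw [hpropmem]
        by_cases hx : x ∈ σ.prop j
        · rw [heq]; exact Or.inr hx
        · rw [heq] at hlt₁
          exact absurd (hmax x hx) (not_le.2 hlt₁)
      · exact doStep_prop_sub rk σ j w j₁ (hσ.I6 hold hlt₁)
    · intro w₁ j₁ x h₁ hx
      by_cases e₁ : w₁ = w
      · subst e₁; rw [hnew] at h₁
        obtain rfl : j = j₁ := Option.some_inj.1 h₁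
        rcases (hpropmem j x).1 hx with ⟨_, rfl⟩ | hold
        · exact le_refl _
        · by_contra hcon
          exact hw (hσ.I6 hold (not_le.1 hcon))
      · rw [hheld_other e₁] at h₁
        have hj₁ : j₁ ≠ j := fun e => (hfree w₁) (e ▸ h₁)
        rcases (hpropmem j₁ x).1 hx with ⟨e, _⟩ | hold
        · exact absurd e hj₁
        · exact hσ.I7 h₁ hold
  case inr.inr =>
    -- w keeps c
    have hcj : c ≠ j := fun e => (hfree w) (e ▸ hc)
    have hheld_all : ∀ w' : Fin K, (doStep rk σ j w).held w' = σ.held w' := by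
      intro w'
      by_cases e : w' = w
      · subst e; rw [hnew, hc]
      · exact hheld_other e
    constructor
    · intro w₁ w₂ j₁ h₁ h₂
      rw [hheld_all] at h₁ h₂; exact hσ.I1 h₁ h₂
    · intro w₁ j₁ h₁
      rw [hheld_all] at h₁
      exact doStep_prop_sub rk σ j w j₁ (hσ.I2 h₁)
    · intro w₁ j₁ h₁
      rcases (hpropmem j₁ w₁).1 h₁ with ⟨heq, rfl⟩ | hold
      · exact ⟨c, by rw [hheld_all]; exact hc, by rw [heq]; exact hle⟩
      · obtain ⟨j', hj', hr⟩ := hσ.I3 hold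
        exact ⟨j', by rw [hheld_all]; exact hj', hr⟩
    · intro j₁ w₁ x h₁ hlt₁
      rcases (hpropmem j₁ w₁).1 h₁ with ⟨heq, rfl⟩ | hold
      · rw [hpropmem]
        by_cases hx : x ∈ σ.prop j
        · rw [heq]; exact Or.inr hx
        · rw [heq] at hlt₁
          exact absurd (hmax x hx) (not_le.2 hlt₁)
      · exact doStep_prop_sub rk σ j w j₁ (hσ.I6 hold hlt₁)
    · intro w₁ j₁ x h₁ hx
      rw [hheld_all] at h₁
      have hj₁ : j₁ ≠ j := fun e => (hfree w₁) (e ▸ h₁)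
      rcases (hpropmem j₁ x).1 hx with ⟨e, _⟩ | hold
      · exact absurd e hj₁
      · exact hσ.I7 h₁ hold



lemma inv_run (t : ℕ) : Inv μ rk (run μ rk t) := by
  induction t with
  | zero =>
      constructor
      · intro w w' j h _; exact absurd h (by simp [run])
      · intro w j h; exact absurd h (by simp [run])
      · intro w j h; exact absurd h (by simp [run])
      · intro j w x h _; exact absurd h (by simp [run])
      · intro w j x h _; exact absurd h (by simp [run])
  | succ n ih =>
      rcases step_cases μ rk (run μ rk n) with ⟨_, h⟩ | ⟨j₀, w₀, hf, hw, hm, h⟩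
      · rw [run_succ, h]; exact ih
      · rw [run_succ, h]; exact inv_doStep μ rk ih hf hw hm

noncomputable def sumP (σ : St N K) : ℕ := ∑ j : Fin N, (σ.prop j).card

lemma sumP_le (σ : St N K) : sumP σ ≤ N * K := by
  calc sumP σ ≤ ∑ _j : Fin N, K := by
        refine Finset.sum_le_sum fun j _ => ?_
        simpa using Finset.card_le_card (Finset.subset_univ (σ.prop j))
    _ = N * K := by simp [Finset.sum_const, mul_comm]

lemma sumP_doStep (σ : St N K) {j : Fin N} {w : Fin K} (hw : w ∉ σ.prop j) :
    sumP (doStep rk σ j w) = sumP σ + 1 := by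
  unfold sumP
  have : ∀ j' : Fin N, ((doStep rk σ j w).prop j').card
      = (σ.prop j').card + (if j' = j then 1 else 0) := by
    intro j'
    rw [doStep_prop]
    by_cases hjj : j' = j
    · subst hjj; rw [if_pos rfl, if_pos rfl, Finset.card_insert_of_notMem hw]
    · rw [if_neg hjj, if_neg hjj, add_zero]
  rw [Finset.sum_congr rfl (fun j' _ => this j'), Finset.sum_add_distrib]
  simp

/-- total run length bound -/
lemma terminal_or_ge (t : ℕ) : (¬ Chooseable μ (run μ rk t)) ∨ t ≤ sumP (run μ rk t) := by
  induction t with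
  | zero => exact Or.inr (Nat.zero_le _)
  | succ n ih =>
      by_cases h : Chooseable μ (run μ rk n)
      · rcases ih with hno | hle
        · exact absurd h hno
        · right
          rcases step_cases μ rk (run μ rk n) with ⟨hno, _⟩ | ⟨j₀, w₀, hf, hw, hm, he⟩
          · exact absurd h hno
          · rw [run_succ, he, sumP_doStep rk _ hw]
            omega
      · left
        have : run μ rk (n + 1) = run μ rk n := by
          rw [run_succ, step, dif_neg h]
        rw [this]; exact h

lemma terminal_at (t : ℕ) (ht : N * K + 1 ≤ t) : ¬ Chooseable μ (run μ rk t) := by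
  rcases terminal_or_ge μ rk t with h | h
  · exact h
  · exact absurd (le_trans ht (le_trans h (sumP_le _))) (by omega)

lemma run_stab {t : ℕ} (ht : N * K + 1 ≤ t) : run μ rk t = run μ rk (N * K + 1) := by
  induction t with
  | zero => omega
  | succ n ih =>
      rcases Nat.lt_or_ge n (N * K + 1) with h | h
      · have : n + 1 = N * K + 1 := by omega
        rw [this]
      · rw [run_succ, step, dif_neg (terminal_at μ rk n h), ih h]

lemma evt_lt_T {t : ℕ} {j : Fin N} {w : Fin K} (h : evt μ rk t j w) : t < N * K + 1 := by
  by_contra hc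
  push_neg at hc
  have h1 : run μ rk t = run μ rk (N * K + 1) := run_stab μ rk hc
  have h2 : run μ rk (t + 1) = run μ rk (N * K + 1) := run_stab μ rk (by omega)
  obtain ⟨ha, hb⟩ := h
  rw [h1] at ha
  rw [h2] at hb
  exact ha hb

/-- at the final state every agent is matched -/
lemma all_matched (hNK : N ≤ K) (j : Fin N) :
    ∃ w, (run μ rk (N * K + 1)).held w = some j := by
  classical
  by_contra hj
  push_neg at hj
  set σ := run μ rk (N * K + 1) with hσdef
  have hfree : freeAg σ j := fun w => hj w
  have hterm := terminal_at μ rk (N * K + 1) (le_refl _)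
  have hInv := inv_run μ rk (N * K + 1)
  -- j must have proposed everywhere
  have hall : ∀ w : Fin K, w ∈ σ.prop j := by
    intro w
    by_contra hw
    have hne : (Finset.univ.filter (fun x => x ∉ σ.prop j)).Nonempty :=
      ⟨w, by simp [hw]⟩
    obtain ⟨w', hw', hmax⟩ := Finset.exists_max_image _ (fun x => μ j x) hne
    refine hterm ⟨(j, w'), hfree, ?_, ?_⟩
    · simpa using (Finset.mem_filter.1 hw').2
    · intro x hx
      exact hmax x (by simp; exact hx)
  -- hence every arm is held, giving an injection from arms to agents
  have hheld : ∀ w : Fin K, ∃ a, σ.held w = some a := by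
    intro w
    obtain ⟨a, ha, _⟩ := hInv.I3 (hall w)
    exact ⟨a, ha⟩
  choose f hf using hheld
  have hinj : Function.Injective f := by
    intro w w' he
    exact hInv.I1 (hf w) (by rw [he]; exact hf w')
  have hcard : Fintype.card (Fin K) = Fintype.card (Fin N) := by
    simp only [Fintype.card_fin]
    exact le_antisymm (by simpa using Fintype.card_le_of_injective f hinj) hNK
  have hbij : Function.Bijective f :=
    (Fintype.bijective_iff_injective_and_card f).2 ⟨hinj, hcard⟩
  obtain ⟨w, hw⟩ := hbij.2 j
  exact hj w (by rw [hf w, hw])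

noncomputable def Mgs (hNK : N ≤ K) : Fin N → Fin K :=
  fun j => (all_matched μ rk hNK j).choose

lemma Mgs_spec (hNK : N ≤ K) (j : Fin N) :
    (run μ rk (N * K + 1)).held (Mgs μ rk hNK j) = some j :=
  (all_matched μ rk hNK j).choose_spec

lemma Mgs_eq (hNK : N ≤ K) {w : Fin K} {j : Fin N}
    (h : (run μ rk (N * K + 1)).held w = some j) : Mgs μ rk hNK j = w :=
  (inv_run μ rk (N * K + 1)).I1 (Mgs_spec μ rk hNK j) h

lemma Mgs_inj (hNK : N ≤ K) : Function.Injective (Mgs μ rk hNK) := by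
  intro j j' h
  have h1 := Mgs_spec μ rk hNK j
  have h2 := Mgs_spec μ rk hNK j'
  rw [h] at h1
  rw [h1] at h2
  exact Option.some_inj.1 h2

lemma Mgs_stable (hNK : N ≤ K) : IsStableMatching (truePref μ) rk (Mgs μ rk hNK) := by
  refine ⟨Mgs_inj μ rk hNK, fun j w hblock => ?_⟩
  obtain ⟨hne, hpref, hor⟩ := hblock
  have hInv := inv_run μ rk (N * K + 1)
  have hmem : Mgs μ rk hNK j ∈ (run μ rk (N * K + 1)).prop j :=
    hInv.I2 (Mgs_spec μ rk hNK j)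
  have hwmem : w ∈ (run μ rk (N * K + 1)).prop j := hInv.I6 hmem hpref
  obtain ⟨j', hj', hrk⟩ := hInv.I3 hwmem
  rcases hor with hun | ⟨i', hi', hlt⟩
  · exact hun j' (Mgs_eq μ rk hNK hj')
  · have : Mgs μ rk hNK i' = w := hi'
    have hheld : (run μ rk (N * K + 1)).held w = some i' := by
      rw [← this]; exact Mgs_spec μ rk hNK i'
    rw [hheld] at hj'
    obtain rfl : j' = i' := Option.some_inj.1 hj'.symm
    exact absurd hlt (not_lt.2 hrk)


theorem blockingLemma (hNK : N ≤ K)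
    (hrk : ∀ w, Function.Injective (rk w)) (hμ : ∀ j, Function.Injective (μ j))
    (m : Fin N → Fin K) (hmInj : Function.Injective m) (i : Fin N)
    (hSi : μ i (Mgs μ rk hNK i) < μ i (m i)) :
    ∃ j k, μ j (m j) ≤ μ j (Mgs μ rk hNK j) ∧ BlockingPair (truePref μ) rk m j k := by
  classical
  set M := Mgs μ rk hNK with hM
  have hMstable := Mgs_stable μ rk hNK
  set S : Finset (Fin N) := Finset.univ.filter (fun j => μ j (M j) < μ j (m j)) with hSdef
  have hSmem : ∀ {j}, j ∈ S ↔ μ j (M j) < μ j (m j) := by intro j; simp [hSdef]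
  have hiS : i ∈ S := hSmem.2 hSi
  by_cases hcase : ∀ a ∈ S, ∃ a'', a'' ∈ S ∧ M a'' = m a
  case neg =>
    push_neg at hcase
    obtain ⟨a, haS, hnot⟩ := hcase
    have hpref : μ a (M a) < μ a (m a) := hSmem.1 haS
    have hMa : M a ≠ m a := fun h => absurd hpref (by rw [h]; exact lt_irrefl _)
    have hnb := hMstable.2 a (m a)
    have h1 : ¬ (∀ i', M i' ≠ m a) := fun hall => hnb ⟨hMa, hpref, Or.inl hall⟩
    push_neg at h1
    obtain ⟨a', ha'⟩ := h1
    have h2 : ¬ (rk (m a) a < rk (m a) a') := fun hlt =>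
      hnb ⟨hMa, hpref, Or.inr ⟨a', ha', hlt⟩⟩
    have hrkle : rk (m a) a' ≤ rk (m a) a := not_lt.1 h2
    have ha'S : a' ∉ S := fun hin => hnot a' hin ha'
    have ha'a : a' ≠ a := by
      intro h; rw [h] at ha'; exact hMa ha'
    have hma' : m a' ≠ m a := fun h => ha'a (hmInj h)
    have hle0 : μ a' (m a') ≤ μ a' (M a') := not_lt.1 (fun hh => ha'S (hSmem.2 hh))
    have hle : μ a' (m a') ≤ μ a' (m a) := by rw [← ha']; exact hle0
    have hltμ : μ a' (m a') < μ a' (m a) := lt_of_le_of_ne hle (fun h => hma' (hμ a' h))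
    have hrklt : rk (m a) a' < rk (m a) a := lt_of_le_of_ne hrkle (fun h => ha'a (hrk (m a) h))
    exact ⟨a', m a, hle0, hma', hltμ, Or.inr ⟨a, rfl, hrklt⟩⟩
  case pos =>
    set W : Finset (Fin K) := S.image m with hW
    have hWsub : W ⊆ S.image M := by
      intro w hw
      obtain ⟨a, haS, hma⟩ := Finset.mem_image.1 hw
      obtain ⟨a'', ha''S, hMa''⟩ := hcase a haS
      exact Finset.mem_image.2 ⟨a'', ha''S, by rw [hMa'', hma]⟩
    have hMinj : Function.Injective M := Mgs_inj μ rk hNK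
    have himg : W = S.image M :=
      Finset.eq_of_subset_of_card_le hWsub
        (by rw [Finset.card_image_of_injective S hMinj, hW,
                Finset.card_image_of_injective S hmInj])
    have hMW : ∀ s ∈ S, M s ∈ W := by
      intro s hs; rw [himg]; exact Finset.mem_image_of_mem M hs
    have hInvFin := inv_run μ rk (N*K+1)
    have hpropm : ∀ s ∈ S, m s ∈ (run μ rk (N*K+1)).prop s := by
      intro s hs
      have h2 : M s ∈ (run μ rk (N*K+1)).prop s := hInvFin.I2 (Mgs_spec μ rk hNK s)
      exact hInvFin.I6 h2 (hSmem.1 hs)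
    have hevt_ms : ∀ s ∈ S, ∃ τ, τ < N*K+1 ∧ evt μ rk τ s (m s) := by
      intro s hs
      obtain ⟨τ, _, hτ, hevt⟩ := prop_origin μ rk (Nat.zero_le _)
        (by simp [run]) (hpropm s hs)
      exact ⟨τ, hτ, hevt⟩
    set TS : Finset ℕ := (Finset.range (N*K+1)).filter
      (fun t => ∃ jw : Fin N × Fin K, jw.1 ∈ S ∧ jw.2 ∈ W ∧ evt μ rk t jw.1 jw.2) with hTS
    have hTSne : TS.Nonempty := by
      obtain ⟨τ, hτ, hevt⟩ := hevt_ms i hiS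
      exact ⟨τ, Finset.mem_filter.2 ⟨Finset.mem_range.2 hτ,
        ⟨(i, m i), hiS, Finset.mem_image_of_mem m hiS, hevt⟩⟩⟩
    set tstar := TS.max' hTSne with htstar
    obtain ⟨htmem, ⟨⟨s, w⟩, hsS, hwW, hevt⟩⟩ := Finset.mem_filter.1 (TS.max'_mem hTSne)
    replace hsS : s ∈ S := hsS
    replace hwW : w ∈ W := hwW
    replace hevt : evt μ rk tstar s w := hevt
    have hlast : ∀ t j' w', j' ∈ S → w' ∈ W → evt μ rk t j' w' → t ≤ tstar := by
      intro t j' w' hj hw he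
      exact TS.le_max' t (Finset.mem_filter.2
        ⟨Finset.mem_range.2 (evt_lt_T μ rk he), ⟨(j', w'), hj, hw, he⟩⟩)
    have htlt : tstar < N*K+1 := Finset.mem_range.1 htmem
    have hfree_s : freeAg (run μ rk tstar) s := (evt_spec μ rk hevt).1
    have hMs : M s = w := by
      by_contra hne
      have h0 : (run μ rk tstar).held (M s) ≠ some s := hfree_s (M s)
      have h1 : (run μ rk (N*K+1)).held (M s) = some s := Mgs_spec μ rk hNK s
      obtain ⟨τ, hτ1, hτ2, hτevt⟩ := became_held μ rk (le_of_lt htlt) h0 h1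
      have hτle : τ ≤ tstar := hlast τ s (M s) hsS (hMW s hsS) hτevt
      have hτeq : τ = tstar := le_antisymm hτle hτ1
      subst hτeq
      exact hne (evt_time_unique μ rk hτevt hevt).2
    obtain ⟨a, haS, hma⟩ := Finset.mem_image.1 hwW
    have has : a ≠ s := by
      intro h; subst h
      have hx := hSmem.1 haS
      rw [hMs, hma] at hx
      exact lt_irrefl _ hx
    obtain ⟨τa, hτalt, hτaevt⟩ := hevt_ms a haS
    rw [hma] at hτaevt
    have hτale : τa ≤ tstar := hlast τa a w haS hwW hτaevt
    have hτane : τa ≠ tstar := by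
      intro h; subst h
      exact has (evt_time_unique μ rk hτaevt hevt).1
    have hwpa : w ∈ (run μ rk tstar).prop a :=
      prop_mono_le μ rk (by omega) a hτaevt.2
    have hInvt := inv_run μ rk tstar
    obtain ⟨m₁, hm₁held, hm₁rk⟩ := hInvt.I3 hwpa
    have hheld_next : (run μ rk (tstar+1)).held w = some s := by
      by_contra hne
      have h1 : (run μ rk (N*K+1)).held w = some s := by
        rw [← hMs]; exact Mgs_spec μ rk hNK s
      obtain ⟨τ, hτ1, hτ2, hτevt⟩ := became_held μ rk
        (by omega : tstar+1 ≤ N*K+1) hne h1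
      have := evt_pair_unique μ rk hτevt hevt
      omega
    have hm₁s : m₁ ≠ s := by
      intro h; rw [h] at hm₁held; exact hfree_s w hm₁held
    have hm₁free : freeAg (run μ rk (tstar+1)) m₁ := by
      intro w'
      by_cases hww : w' = w
      · subst hww; rw [hheld_next]
        exact fun h => hm₁s (Option.some_inj.1 h).symm
      · have heq : (run μ rk (tstar+1)).held w' = (run μ rk tstar).held w' := by
          rw [(evt_spec μ rk hevt).2.2, doStep_held_other rk _ s hww]
        rw [heq]
        intro h
        exact hww (hInvt.I1 h hm₁held)
    have hm₁S : m₁ ∉ S := by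
      intro hin
      have h0 : (run μ rk (tstar+1)).held (M m₁) ≠ some m₁ := hm₁free (M m₁)
      have h1 : (run μ rk (N*K+1)).held (M m₁) = some m₁ := Mgs_spec μ rk hNK m₁
      obtain ⟨τ, hτ1, hτ2, hτevt⟩ := became_held μ rk
        (by omega : tstar+1 ≤ N*K+1) h0 h1
      have := hlast τ m₁ (M m₁) hin (hMW m₁ hin) hτevt
      omega
    have hm₁a : m₁ ≠ a := by
      intro h; rw [h] at hm₁S; exact hm₁S haS
    have hrklt : rk w m₁ < rk w a := lt_of_le_of_ne hm₁rk (fun h => hm₁a (hrk w h))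
    have hwprop : w ∈ (run μ rk (N*K+1)).prop m₁ :=
      prop_mono_le μ rk (le_of_lt htlt) m₁ (hInvt.I2 hm₁held)
    have hμ1 : μ m₁ (M m₁) ≤ μ m₁ w := hInvFin.I7 (Mgs_spec μ rk hNK m₁) hwprop
    have hμ0 : μ m₁ (m m₁) ≤ μ m₁ (M m₁) := not_lt.1 (fun hh => hm₁S (hSmem.2 hh))
    have hmm₁ : m m₁ ≠ w := by
      rw [← hma]; exact fun h => hm₁a (hmInj h)
    have hμlt : μ m₁ (m m₁) < μ m₁ w :=
      lt_of_le_of_ne (le_trans hμ0 hμ1) (fun h => hmm₁ (hμ m₁ h))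
    exact ⟨m₁, w, hμ0, hmm₁, hμlt, Or.inr ⟨a, hma, hrklt⟩⟩

end GSProof

/-- if in some round agent `i` is matched (by the platform, while all other
agents submit UCB rankings and `i` submits arbitrary rankings) to an arm strictly better
than its optimal stable match `mbar i`, then the matching played that round contains a
blocking triplet `(j, k, k')` with `j ≠ i`. -/
theorem better_than_optimal_blocking_triplet
    (N K : ℕ) (hNK : N ≤ K)
    (μ : Fin N → Fin K → ℝ) (armRank : Fin K → Fin N → ℕ)
    (harmRank : ∀ j, Function.Injective (armRank j))
    (hdistinct : ∀ i, Function.Injective (μ i))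
    -- `mbar` is the agent-optimal stable matching for the true preferences
    (mbar : Fin N → Fin K)
    (hbarStable : IsStableMatching (truePref μ) armRank mbar)
    (hbarOpt : ∀ m', IsStableMatching (truePref μ) armRank m' →
      ∀ i, μ i (m' i) ≤ μ i (mbar i))
    -- the matching played this round, matching `i` strictly above its optimal stable match
    (m : Fin N → Fin K) (hmInj : Function.Injective m)
    (i : Fin N) (hbetter : μ i (mbar i) < μ i (m i)) :
    ∃ (j : Fin N) (k k' : Fin K), j ≠ i ∧ m j = k' ∧ k ≠ k' ∧ μ j k' < μ j k ∧
      ((∀ i', m i' ≠ k) ∨ ∃ i', m i' = k ∧ armRank k j < armRank k i') := by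
  classical
  have hMstable := GSProof.Mgs_stable μ armRank hNK
  have hMi : μ i (GSProof.Mgs μ armRank hNK i) < μ i (m i) :=
    lt_of_le_of_lt (hbarOpt _ hMstable i) hbetter
  obtain ⟨j, k, hjle, hblock⟩ :=
    GSProof.blockingLemma μ armRank hNK harmRank hdistinct m hmInj i hMi
  have hji : j ≠ i := by
    intro h; subst h
    exact absurd hMi (not_lt.2 hjle)
  obtain ⟨hne, hpref, hor⟩ := hblock
  exact ⟨j, k, m j, hji, rfl, fun h => hne h.symm, hpref, hor⟩
end
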